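/- Let G be a cyclic group of prime-power order p^α. If G = MS is a complete splitting, then either |M| = 1 (and S = G) or |S| = 1 (and M is a complete set of residues modulo p^α). -/

import Mathlib

/-!
Replace the integer factor by its image `A` in `ℤ/p^α`, on which the cast is injective, and
suppose `|A|, |B| > 1`; then neither factor contains `0`. Write `0 = a * b` and let `v` be the
`p`-adic valuation. Multiplication by `b` embeds `A` into `p^{v b} ℤ/p^α`, multiplication by `a`
embeds `B` into `p^{v a} ℤ/p^α`, and `v a + v b ≥ α`; as `|A| |B| = p^α`, all of this is tight.
So `x ↦ x * b` maps `A` onto `p^{v b} ℤ/p^α`, the units of `A` going to the elements of exact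
valuation `v b`, whence `A` has `φ |A|` units and likewise `B` has `φ |B|`. The units of `ℤ/p^α`
split as well, so `φ |A| φ |B| = φ (|A| |B|)`, impossible since `p` divides both `|A|` and `|B|`.
-/

open Finset

theorem Nat.totient_mul_totient_lt {a b : ℕ} (ha : 0 < a) (hb : 0 < b) (hab : 1 < a.gcd b) :
    a.totient * b.totient < (a * b).totient := by
  have key := Nat.totient_gcd_mul_totient_mul a b
  have hlt := Nat.totient_lt _ hab
  have hpos : 0 < (a * b).totient := Nat.totient_pos.2 (Nat.mul_pos ha hb)
  nlinarith

def IsCompleteSplitting {R : Type*} [Mul R] (A B : Finset R) : Prop :=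
  Set.BijOn (fun q : R × R => q.1 * q.2) ↑(A ×ˢ B) Set.univ

namespace IsCompleteSplitting

section CommMonoid

variable {R : Type*} [CommMonoid R] {A B : Finset R}

theorem symm (h : IsCompleteSplitting A B) : IsCompleteSplitting B A := by
  refine ⟨fun _ _ => Set.mem_univ _, ?_, ?_⟩
  · rintro ⟨b, a⟩ hba ⟨b', a'⟩ hba' he
    simp only [coe_product, Set.mem_prod, mem_coe] at hba hba'
    have := h.injOn (by simpa using ⟨hba.2, hba.1⟩ : (a, b) ∈ ↑(A ×ˢ B))
      (by simpa using ⟨hba'.2, hba'.1⟩ : (a', b') ∈ ↑(A ×ˢ B))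
      (by simpa only [mul_comm] using he)
    simp_all
  · intro x _
    obtain ⟨⟨a, b⟩, hab, rfl⟩ := h.surjOn (Set.mem_univ x)
    simp only [coe_product, Set.mem_prod, mem_coe] at hab
    exact ⟨(b, a), by simpa using ⟨hab.2, hab.1⟩, mul_comm b a⟩

theorem injOn_mul_right (h : IsCompleteSplitting A B) {b : R} (hb : b ∈ B) :
    Set.InjOn (· * b) A := fun a ha a' ha' he =>
  congrArg Prod.fst (h.injOn (by simpa using ⟨ha, hb⟩ : (a, b) ∈ ↑(A ×ˢ B))
    (by simpa using ⟨ha', hb⟩ : (a', b) ∈ ↑(A ×ˢ B)) he)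

variable [Fintype R]

theorem card_filter_product (h : IsCompleteSplitting A B) (P : R → Prop) [DecidablePred P] :
    #{q ∈ A ×ˢ B | P (q.1 * q.2)} = #{x | P x} := by
  refine card_nbij (fun q => q.1 * q.2) (fun q hq => ?_) (h.injOn.mono ?_) (fun x hx => ?_)
  · simp only [coe_filter, Set.mem_ofPred_eq] at hq ⊢
    exact ⟨mem_univ _, hq.2⟩
  · intro q hq
    exact (mem_filter.1 hq).1
  · simp only [coe_filter, mem_univ, true_and, Set.mem_ofPred_eq] at hx
    obtain ⟨q, hq, rfl⟩ := h.surjOn (Set.mem_univ x)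
    exact ⟨q, by rw [coe_filter]; exact ⟨hq, hx⟩, rfl⟩

theorem card_mul_card (h : IsCompleteSplitting A B) : #A * #B = Fintype.card R := by
  simpa using h.card_filter_product (fun _ => True)

theorem card_filter_isUnit_mul_card_filter_isUnit (h : IsCompleteSplitting A B)
    [DecidablePred (IsUnit : R → Prop)] :
    #{a ∈ A | IsUnit a} * #{b ∈ B | IsUnit b} = #{x : R | IsUnit x} := by
  rw [← card_product, ← filter_product, ← h.card_filter_product]
  simp only [IsUnit.mul_iff]

end CommMonoid

theorem ne_zero_of_one_lt_card {R : Type*} [CommMonoidWithZero R] {A B : Finset R}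
    (h : IsCompleteSplitting A B) (hA : 1 < #A) {b : R} (hb : b ∈ B) : b ≠ 0 := by
  rintro rfl
  obtain ⟨a, ha, a', ha', hne⟩ := one_lt_card.1 hA
  exact hne (h.injOn_mul_right hb ha ha' (by simp))

end IsCompleteSplitting

section IntCast

variable {R : Type*} [Ring R] {M : Finset ℤ} {S : Finset R}

theorem injOn_intCast_of_existsUnique
    (h : ∀ x : R, ∃! q : ℤ × R, q.1 ∈ M ∧ q.2 ∈ S ∧ q.1 • q.2 = x) :
    Set.InjOn (Int.cast : ℤ → R) M := by
  intro m hm m' hm' he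
  obtain ⟨⟨_, s⟩, ⟨-, hs, -⟩, -⟩ := h 0
  have := (h (m • s)).unique (y₁ := (m, s)) ⟨hm, hs, rfl⟩ (y₂ := (m', s))
    ⟨hm', hs, by simp only [zsmul_eq_mul]; rw [he]⟩
  exact congrArg Prod.fst this

theorem isCompleteSplitting_image_intCast_of_existsUnique [DecidableEq R]
    (h : ∀ x : R, ∃! q : ℤ × R, q.1 ∈ M ∧ q.2 ∈ S ∧ q.1 • q.2 = x) :
    IsCompleteSplitting (M.image Int.cast) S := by
  refine ⟨fun _ _ => Set.mem_univ _, ?_, fun x _ => ?_⟩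
  · rintro ⟨_, s⟩ hms ⟨_, s'⟩ hms' he
    simp only [coe_product, coe_image, Set.mem_prod, Set.mem_image, mem_coe] at hms hms'
    obtain ⟨⟨m, hm, rfl⟩, hs⟩ := hms
    obtain ⟨⟨m', hm', rfl⟩, hs'⟩ := hms'
    have := (h (m • s)).unique (y₁ := (m, s)) ⟨hm, hs, rfl⟩ (y₂ := (m', s'))
      ⟨hm', hs', by simpa only [zsmul_eq_mul] using he.symm⟩
    simp_all
  · obtain ⟨⟨m, s⟩, ⟨hm, hs, rfl⟩, -⟩ := h x
    exact ⟨((m : R), s), by simpa using ⟨⟨m, hm, rfl⟩, hs⟩, (zsmul_eq_mul s m).symm⟩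

end IntCast

namespace ZMod

theorem card_filter_dvd_val {n d : ℕ} [NeZero n] (hd : d ∣ n) :
    #{x : ZMod n | d ∣ x.val} = n / d := by
  obtain ⟨e, rfl⟩ := hd
  have hd0 : 0 < d := Nat.pos_of_ne_zero (left_ne_zero_of_mul (NeZero.ne (d * e)))
  have hlt {y : ℕ} (hy : y < e) : d * y < d * e := Nat.mul_lt_mul_of_pos_left hy hd0
  rw [Nat.mul_div_cancel_left e hd0]
  refine (card_nbij' (t := range e) (fun x => x.val / d) (fun y => ((d * y : ℕ) : ZMod (d * e)))
    (fun x _ => ?_) (fun y hy => ?_) (fun x hx => ?_) (fun y hy => ?_)).trans ?_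
  · simpa [Nat.div_lt_iff_lt_mul hd0, mul_comm d] using x.val_lt
  · simp only [coe_range, Set.mem_Iio] at hy
    simp only [coe_filter, mem_univ, true_and, Set.mem_ofPred_eq]
    rw [val_natCast, Nat.mod_eq_of_lt (hlt hy)]
    exact dvd_mul_right d y
  · simp only [coe_filter, mem_univ, true_and, Set.mem_ofPred_eq] at hx
    simp [Nat.mul_div_cancel' hx]
  · simp only [coe_range, Set.mem_Iio] at hy
    change (((d * y : ℕ) : ZMod (d * e))).val / d = y
    rw [val_natCast, Nat.mod_eq_of_lt (hlt hy), Nat.mul_div_cancel_left y hd0]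
  · exact card_range e

theorem dvd_val_mul_iff {n d : ℕ} (hd : d ∣ n) (x y : ZMod n) :
    d ∣ (x * y).val ↔ d ∣ x.val * y.val := by
  rw [val_mul, Nat.dvd_mod_iff hd]

theorem card_filter_isUnit (n : ℕ) [NeZero n] :
    #{x : ZMod n | IsUnit x} = n.totient := by
  rw [← card_units_eq_totient, ← card_univ, ← card_map ⟨Units.val, Units.val_injective⟩]
  congr 1
  ext x
  simp [IsUnit, eq_comm]

end ZMod

section PrimePower

variable {p α : ℕ} [hp : Fact p.Prime]

theorem padicValNat_val_lt {x : ZMod (p ^ α)} (hx : x ≠ 0) : padicValNat p x.val < α :=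
  (padicValNat_le_nat_log _).trans_lt
    (Nat.log_lt_of_lt_pow ((ZMod.val_ne_zero x).2 hx) x.val_lt)

theorem card_filter_pow_dvd_val {k : ℕ} (hk : k ≤ α) :
    #{x : ZMod (p ^ α) | p ^ k ∣ x.val} = p ^ (α - k) := by
  rw [ZMod.card_filter_dvd_val (pow_dvd_pow p hk), Nat.pow_div hk hp.out.pos]

theorem pow_dvd_val_mul_iff {x y : ZMod (p ^ α)} (hx : x ≠ 0) (hy : y ≠ 0) {k : ℕ} (hk : k ≤ α) :
    p ^ k ∣ (x * y).val ↔ k ≤ padicValNat p x.val + padicValNat p y.val := by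
  have hx' := (ZMod.val_ne_zero x).2 hx
  have hy' := (ZMod.val_ne_zero y).2 hy
  rw [ZMod.dvd_val_mul_iff (pow_dvd_pow p hk), padicValNat_dvd_iff_le (mul_ne_zero hx' hy'),
    padicValNat.mul hx' hy']

theorem pow_padicValNat_dvd_val_mul (x : ZMod (p ^ α)) {y : ZMod (p ^ α)} (hy : y ≠ 0) :
    p ^ padicValNat p y.val ∣ (x * y).val := by
  rw [ZMod.dvd_val_mul_iff (pow_dvd_pow p (padicValNat_val_lt hy).le)]
  exact Dvd.dvd.mul_left pow_padicValNat_dvd _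

theorem pow_succ_padicValNat_dvd_val_mul_iff {x y : ZMod (p ^ α)} (hy : y ≠ 0) :
    p ^ (padicValNat p y.val + 1) ∣ (x * y).val ↔ p ∣ x.val := by
  rcases eq_or_ne x 0 with rfl | hx
  · simp
  rw [pow_dvd_val_mul_iff hx hy (padicValNat_val_lt hy),
    dvd_iff_padicValNat_ne_zero ((ZMod.val_ne_zero x).2 hx)]
  omega

theorem le_padicValNat_add_of_mul_eq_zero {x y : ZMod (p ^ α)} (hx : x ≠ 0) (hy : y ≠ 0)
    (hxy : x * y = 0) : α ≤ padicValNat p x.val + padicValNat p y.val :=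
  (pow_dvd_val_mul_iff hx hy le_rfl).1 (by simp [hxy])

theorem isUnit_iff_not_dvd_val (hα : α ≠ 0) (x : ZMod (p ^ α)) : IsUnit x ↔ ¬ p ∣ x.val := by
  rw [← ZMod.isUnit_natCast_iff_not_dvd_pow hp.out (Nat.pos_of_ne_zero hα), ZMod.natCast_zmod_val]

end PrimePower

namespace IsCompleteSplitting

variable {p α : ℕ} [hp : Fact p.Prime] {A B : Finset (ZMod (p ^ α))}

theorem card_le_pow (h : IsCompleteSplitting A B) {b : ZMod (p ^ α)} (hb : b ∈ B) (hb0 : b ≠ 0) :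
    #A ≤ p ^ (α - padicValNat p b.val) := by
  rw [← card_filter_pow_dvd_val (padicValNat_val_lt hb0).le]
  refine card_le_card_of_injOn (· * b) (fun a _ => ?_) (h.injOn_mul_right hb)
  simpa using pow_padicValNat_dvd_val_mul a hb0

theorem image_mul_right_eq (h : IsCompleteSplitting A B) {b : ZMod (p ^ α)} (hb : b ∈ B)
    (hb0 : b ≠ 0) (hA : #A = p ^ (α - padicValNat p b.val)) :
    A.image (· * b) = ({x | p ^ padicValNat p b.val ∣ x.val} : Finset (ZMod (p ^ α))) := by
  refine eq_of_subset_of_card_le (fun x hx => ?_) ?_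
  · obtain ⟨a, -, rfl⟩ := mem_image.1 hx
    simpa using pow_padicValNat_dvd_val_mul a hb0
  · rw [card_image_of_injOn (h.injOn_mul_right hb), hA,
      card_filter_pow_dvd_val (padicValNat_val_lt hb0).le]

theorem card_filter_isUnit_eq_totient [DecidablePred (IsUnit : ZMod (p ^ α) → Prop)]
    (h : IsCompleteSplitting A B) {b : ZMod (p ^ α)} (hb : b ∈ B) (hb0 : b ≠ 0)
    (hA : #A = p ^ (α - padicValNat p b.val)) :
    #{a ∈ A | IsUnit a} = (#A).totient := by
  set k := padicValNat p b.val
  have hk : k < α := padicValNat_val_lt hb0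
  have hnonunit : #{a ∈ A | ¬IsUnit a} = p ^ (α - (k + 1)) := by
    have hA' : {a ∈ A | ¬IsUnit a} = {a ∈ A | p ^ (k + 1) ∣ (a * b).val} :=
      filter_congr fun a _ => by
        rw [isUnit_iff_not_dvd_val (by omega), not_not, pow_succ_padicValNat_dvd_val_mul_iff hb0]
    rw [hA', ← card_image_of_injOn ((h.injOn_mul_right hb).mono (filter_subset _ _)),
      ← filter_image (p := fun x : ZMod (p ^ α) => p ^ (k + 1) ∣ x.val),
      h.image_mul_right_eq hb hb0 hA, filter_filter,
      ← card_filter_pow_dvd_val (show k + 1 ≤ α by omega)]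
    congr 1
    exact filter_congr fun x _ => and_iff_right_of_imp (dvd_trans (pow_dvd_pow p k.le_succ))
  obtain ⟨n, hn⟩ : ∃ n, α - k = n + 1 := ⟨α - k - 1, by omega⟩
  have hn' : α - (k + 1) = n := by omega
  have hsplit := card_filter_add_card_filter_not (s := A) (fun a => IsUnit a)
  rw [hn] at hA
  rw [hn'] at hnonunit
  rw [hA, Nat.totient_prime_pow_succ hp.out, Nat.mul_sub_one, ← pow_succ]
  omega

theorem card_eq_pow_of_mul_eq_zero (h : IsCompleteSplitting A B) {a b : ZMod (p ^ α)}
    (ha : a ∈ A) (hb : b ∈ B) (ha0 : a ≠ 0) (hb0 : b ≠ 0) (hab : a * b = 0) :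
    #A = p ^ (α - padicValNat p b.val) ∧ #B = p ^ (α - padicValNat p a.val) := by
  have hα := le_padicValNat_add_of_mul_eq_zero ha0 hb0 hab
  have hAle := h.card_le_pow hb hb0
  have hBle := h.symm.card_le_pow ha ha0
  refine (mul_eq_mul_iff_eq_and_eq_of_pos hAle hBle (card_pos.2 ⟨a, ha⟩)
    (pow_pos hp.out.pos _)).1 (le_antisymm (Nat.mul_le_mul hAle hBle) ?_)
  rw [h.card_mul_card, ZMod.card, ← pow_add]
  exact Nat.pow_le_pow_right hp.out.pos (by omega)

theorem card_eq_one_or_card_eq_one (h : IsCompleteSplitting A B) : #A = 1 ∨ #B = 1 := by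
  classical
  have hcard : #A * #B = p ^ α := by rw [h.card_mul_card, ZMod.card]
  have hcard0 : #A * #B ≠ 0 := by rw [hcard]; exact (pow_pos hp.out.pos α).ne'
  by_contra! hAB
  have hA : 1 < #A := by have := left_ne_zero_of_mul hcard0; omega
  have hB : 1 < #B := by have := right_ne_zero_of_mul hcard0; omega
  obtain ⟨⟨a, b⟩, hab, hab0 : a * b = 0⟩ := h.surjOn (Set.mem_univ 0)
  obtain ⟨ha, hb⟩ : a ∈ A ∧ b ∈ B := mem_product.1 hab
  have ha0 := h.symm.ne_zero_of_one_lt_card hB ha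
  have hb0 := h.ne_zero_of_one_lt_card hA hb
  obtain ⟨hAeq, hBeq⟩ := h.card_eq_pow_of_mul_eq_zero ha hb ha0 hb0 hab0
  have hunits : (#A).totient * (#B).totient = (#A * #B).totient := by
    rw [← h.card_filter_isUnit_eq_totient hb hb0 hAeq,
      ← h.symm.card_filter_isUnit_eq_totient ha ha0 hBeq,
      h.card_filter_isUnit_mul_card_filter_isUnit, ZMod.card_filter_isUnit, hcard]
  have hpA : p ∣ #A := hAeq ▸ dvd_pow_self p (by have := padicValNat_val_lt hb0; omega)
  have hpB : p ∣ #B := hBeq ▸ dvd_pow_self p (by have := padicValNat_val_lt ha0; omega)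
  have hgcd : 1 < (#A).gcd #B := hp.out.one_lt.trans_le
    (Nat.le_of_dvd (Nat.gcd_pos_of_pos_left _ (by omega)) (Nat.dvd_gcd hpA hpB))
  exact (Nat.totient_mul_totient_lt (by omega) (by omega) hgcd).ne hunits

end IsCompleteSplitting

theorem stmt_5_general (p : ℕ) (hp : p.Prime) (α : ℕ)
    (M : Finset ℤ) (S : Finset (ZMod (p ^ α)))
    (hCS : ∀ x : ZMod (p ^ α), ∃! q : ℤ × ZMod (p ^ α),
      q.1 ∈ M ∧ q.2 ∈ S ∧ q.1 • q.2 = x) :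
    (M.card = 1 ∧ ∀ x : ZMod (p ^ α), x ∈ S) ∨
    (S.card = 1 ∧ ∀ r : ZMod (p ^ α), ∃! m : ℤ, m ∈ M ∧ (m : ZMod (p ^ α)) = r) := by
  have : Fact p.Prime := ⟨hp⟩
  have hM := injOn_intCast_of_existsUnique hCS
  have h := isCompleteSplitting_image_intCast_of_existsUnique hCS
  have hcard := h.card_mul_card
  rw [card_image_of_injOn hM] at hcard
  rcases h.card_eq_one_or_card_eq_one with hA | hS
  · rw [card_image_of_injOn hM] at hA
    refine .inl ⟨hA, fun x => ?_⟩
    have hS : #S = Fintype.card (ZMod (p ^ α)) := by rwa [hA, one_mul] at hcard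
    rw [eq_univ_of_card S hS]
    exact mem_univ x
  · refine .inr ⟨hS, fun r => ?_⟩
    have hA : M.image (Int.cast : ℤ → ZMod (p ^ α)) = univ := by
      apply eq_univ_of_card
      rw [card_image_of_injOn hM, ← hcard, hS, mul_one]
    obtain ⟨m, hm, rfl⟩ := mem_image.1 (hA ▸ mem_univ r)
    exact ⟨m, ⟨hm, rfl⟩, fun m' ⟨hm', he⟩ => hM hm' hm he⟩

theorem stmt_5 (p : ℕ) (hp : p.Prime) (α : ℕ) (hα : 0 < α)
    (M : Finset ℤ) (S : Finset (ZMod (p ^ α)))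
    (hCS : ∀ x : ZMod (p ^ α), ∃! q : ℤ × ZMod (p ^ α),
      q.1 ∈ M ∧ q.2 ∈ S ∧ q.1 • q.2 = x) :
    (M.card = 1 ∧ ∀ x : ZMod (p ^ α), x ∈ S) ∨
    (S.card = 1 ∧ ∀ r : ZMod (p ^ α), ∃! m : ℤ, m ∈ M ∧ (m : ZMod (p ^ α)) = r) :=
  stmt_5_general p hp α M S hCS
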